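/- The lifted heap disjunction ‖ on Option (Finset (V × V)) is commutative and has the empty heap emp = some ∅ as a two-sided identity: for all x and y, x ‖ y = y ‖ x, emp ‖ x = x, and x ‖ emp = x. -/

import Mathlib

variable {V : Type*}

/-- The vertex set of a finite directed edge set. -/
noncomputable def verts [DecidableEq V] (E : Finset (V × V)) : Finset V :=
  E.image Prod.fst ∪ E.image Prod.snd

open scoped Classical in
/-- Heap disjunction lifted to possibly-inconsistent heaps. -/
noncomputable def hdisj [DecidableEq V] :
    Option (Finset (V × V)) → Option (Finset (V × V)) → Option (Finset (V × V))
  | some E₁, some E₂ => if Disjoint (verts E₁) (verts E₂) then some (E₁ ∪ E₂) else none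
  | none, _ => none
  | _, none => none

/-- The empty heap. -/
def emp : Option (Finset (V × V)) := some ∅

section HeapDisjunction

variable [DecidableEq V]

@[simp]
theorem verts_empty : verts (∅ : Finset (V × V)) = ∅ := by
  simp [verts]

@[simp]
theorem hdisj_none_left (x : Option (Finset (V × V))) : hdisj none x = none := by
  cases x <;> rfl

@[simp]
theorem hdisj_none_right (x : Option (Finset (V × V))) : hdisj x none = none := by
  cases x <;> rfl

theorem hdisj_some_some (E₁ E₂ : Finset (V × V)) :
    hdisj (some E₁) (some E₂) =
      if Disjoint (verts E₁) (verts E₂) then some (E₁ ∪ E₂) else none := by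
  rw [hdisj]

theorem hdisj_comm (x y : Option (Finset (V × V))) : hdisj x y = hdisj y x := by
  rcases x with _ | E₁ <;> rcases y with _ | E₂
  · rfl
  · simp
  · simp
  · simp only [hdisj_some_some, disjoint_comm, Finset.union_comm]

theorem emp_hdisj (x : Option (Finset (V × V))) : hdisj emp x = x := by
  rcases x with _ | E
  · exact hdisj_none_right emp
  · simp [emp, hdisj_some_some]

theorem hdisj_emp (x : Option (Finset (V × V))) : hdisj x emp = x := by
  rw [hdisj_comm, emp_hdisj]

end HeapDisjunction

theorem hdisj_comm_id [DecidableEq V] :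
    (∀ x y : Option (Finset (V × V)), hdisj x y = hdisj y x) ∧
      (∀ x : Option (Finset (V × V)), hdisj emp x = x) ∧
      (∀ x : Option (Finset (V × V)), hdisj x emp = x) :=
  ⟨hdisj_comm, emp_hdisj, hdisj_emp⟩
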